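/- Let B ∈ ℝ^{M×N} and let x ∈ ℝ^N with x_i ≠ 0 for some coordinate i. Then the partial derivative ∂ψ_B/∂x_i(x) of the GMC penalty exists at x and either has the same sign as x_i or equals zero; equivalently, x_i · ∂ψ_B/∂x_i(x) ≥ 0. -/
import Mathlib

open Matrix

/-- The ℓ₁ norm on `ℝ^N`. -/
noncomputable def norm1 {N : ℕ} (v : Fin N → ℝ) : ℝ := ∑ n, |v n|

/-- The squared Euclidean (ℓ₂) norm on `ℝ^M`. -/
def norm2sq {M : ℕ} (u : Fin M → ℝ) : ℝ := ∑ m, (u m) ^ 2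

/-- The generalized Huber function
`S_B(x) = inf_v ( ‖v‖₁ + (1/2) ‖B(x - v)‖₂² )`. -/
noncomputable def genHuber {M N : ℕ} (B : Matrix (Fin M) (Fin N) ℝ) (x : Fin N → ℝ) : ℝ :=
  ⨅ v : Fin N → ℝ, (norm1 v + (1 / 2) * norm2sq (B.mulVec (x - v)))

/-- The generalized MC (GMC) penalty `ψ_B(x) = ‖x‖₁ - S_B(x)`. -/
noncomputable def gmcPenalty {M N : ℕ} (B : Matrix (Fin M) (Fin N) ℝ) (x : Fin N → ℝ) : ℝ :=
  norm1 x - genHuber B x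

section Aux

variable {M N : ℕ}

lemma norm1_nonneg (v : Fin N → ℝ) : 0 ≤ norm1 v :=
  Finset.sum_nonneg fun n _ => abs_nonneg _

lemma norm2sq_nonneg (u : Fin M → ℝ) : 0 ≤ norm2sq u :=
  Finset.sum_nonneg fun m _ => sq_nonneg _

/-- The objective of the generalized Huber infimum. -/
noncomputable def huberObj (B : Matrix (Fin M) (Fin N) ℝ) (y v : Fin N → ℝ) : ℝ :=
  norm1 v + (1 / 2) * norm2sq (B.mulVec (y - v))

lemma huberObj_nonneg (B : Matrix (Fin M) (Fin N) ℝ) (y v : Fin N → ℝ) :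
    0 ≤ huberObj B y v := by
  have := norm1_nonneg v
  have := norm2sq_nonneg (B.mulVec (y - v))
  unfold huberObj; linarith

lemma huberObj_bddBelow (B : Matrix (Fin M) (Fin N) ℝ) (y : Fin N → ℝ) :
    BddBelow (Set.range (huberObj B y)) := by
  refine ⟨0, ?_⟩
  rintro r ⟨v, rfl⟩
  exact huberObj_nonneg B y v

lemma genHuber_eq (B : Matrix (Fin M) (Fin N) ℝ) (y : Fin N → ℝ) :
    genHuber B y = ⨅ v, huberObj B y v := rfl

lemma genHuber_le (B : Matrix (Fin M) (Fin N) ℝ) (y v : Fin N → ℝ) :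
    genHuber B y ≤ huberObj B y v :=
  ciInf_le (huberObj_bddBelow B y) v

lemma genHuber_exists_lt (B : Matrix (Fin M) (Fin N) ℝ) (y : Fin N → ℝ) {ε : ℝ}
    (hε : 0 < ε) : ∃ v, huberObj B y v < genHuber B y + ε := by
  refine exists_lt_of_ciInf_lt ?_
  have : genHuber B y < genHuber B y + ε := by linarith
  exact this

/-- Continuity of the objective. -/
lemma huberObj_continuous (B : Matrix (Fin M) (Fin N) ℝ) (y : Fin N → ℝ) :
    Continuous (huberObj B y) := by
  unfold huberObj
  refine Continuous.add ?_ (Continuous.mul continuous_const ?_)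
  · exact continuous_finset_sum _ fun n _ => (continuous_apply n).abs
  · refine continuous_finset_sum _ fun m _ => ?_
    have : Continuous fun v : Fin N → ℝ => B.mulVec (y - v) m := by
      simp only [Matrix.mulVec, dotProduct, Pi.sub_apply]
      exact continuous_finset_sum _ fun j _ =>
        continuous_const.mul (continuous_const.sub (continuous_apply j))
    exact this.pow 2

/-- A minimizer of the objective exists. -/
lemma huberObj_exists_min (B : Matrix (Fin M) (Fin N) ℝ) (y : Fin N → ℝ) :
    ∃ vs, ∀ v, huberObj B y vs ≤ huberObj B y v := by
  set R : ℝ := huberObj B y 0 with hR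
  have hR0 : 0 ≤ R := huberObj_nonneg B y 0
  have hK : IsCompact (Metric.closedBall (0 : Fin N → ℝ) R) :=
    isCompact_closedBall 0 R
  have hne : (Metric.closedBall (0 : Fin N → ℝ) R).Nonempty :=
    ⟨0, Metric.mem_closedBall_self hR0⟩
  obtain ⟨vs, hvsK, hvs⟩ := hK.exists_isMinOn hne ((huberObj_continuous B y).continuousOn)
  refine ⟨vs, fun v => ?_⟩
  by_cases hv : v ∈ Metric.closedBall (0 : Fin N → ℝ) R
  · exact hvs hv
  · have h1 : R < ‖v‖ := by
      simp only [Metric.mem_closedBall, dist_zero_right, not_le] at hv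
      exact hv
    have h2 : ‖v‖ ≤ norm1 v := by
      refine (pi_norm_le_iff_of_nonneg (norm1_nonneg v)).2 fun n => ?_
      rw [Real.norm_eq_abs]
      exact Finset.single_le_sum (fun j _ => abs_nonneg (v j)) (Finset.mem_univ n)
    have h3 : huberObj B y vs ≤ R := hvs (Metric.mem_closedBall_self hR0)
    have h4 : norm1 v ≤ huberObj B y v := by
      have := norm2sq_nonneg (B.mulVec (y - v))
      unfold huberObj; linarith
    linarith

lemma norm2sq_add_smul (u c : Fin M → ℝ) (h : ℝ) :
    norm2sq (u + h • c) = norm2sq u + 2 * h * (∑ m, u m * c m) + h ^ 2 * norm2sq c := by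
  simp only [norm2sq, Pi.add_apply, Pi.smul_apply, smul_eq_mul, Finset.mul_sum,
    ← Finset.sum_add_distrib]
  exact Finset.sum_congr rfl fun m _ => by ring

lemma norm2sq_half_add (p q : Fin M → ℝ) :
    norm2sq ((1 / 2 : ℝ) • (p + q)) ≤ (norm2sq p + norm2sq q) / 2 := by
  simp only [norm2sq, Pi.smul_apply, Pi.add_apply, smul_eq_mul, Finset.sum_div,
    ← Finset.sum_add_distrib]
  refine Finset.sum_le_sum fun m _ => ?_
  nlinarith [sq_nonneg (p m - q m)]

lemma norm1_half_add (p q : Fin N → ℝ) :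
    norm1 ((1 / 2 : ℝ) • (p + q)) ≤ (norm1 p + norm1 q) / 2 := by
  simp only [norm1, Pi.smul_apply, Pi.add_apply, smul_eq_mul, Finset.sum_div,
    ← Finset.sum_add_distrib]
  refine Finset.sum_le_sum fun n _ => ?_
  rw [abs_mul]
  have := abs_add_le (p n) (q n)
  rw [show |(1 / 2 : ℝ)| = 1 / 2 by norm_num]
  linarith

end Aux

section Aux2

variable {M N : ℕ} (B : Matrix (Fin M) (Fin N) ℝ) (x : Fin N → ℝ) (i : Fin N)

/-- Midpoint convexity of `t ↦ S_B(update x i t)`. -/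
lemma genHuber_midpoint (a b : ℝ) :
    genHuber B (Function.update x i ((a + b) / 2)) ≤
      (genHuber B (Function.update x i a) + genHuber B (Function.update x i b)) / 2 := by
  refine le_of_forall_pos_le_add fun ε hε => ?_
  obtain ⟨va, hva⟩ := genHuber_exists_lt B (Function.update x i a) (half_pos hε)
  obtain ⟨vb, hvb⟩ := genHuber_exists_lt B (Function.update x i b) (half_pos hε)
  have key : Function.update x i ((a + b) / 2) - (1 / 2 : ℝ) • (va + vb)
      = (1 / 2 : ℝ) • ((Function.update x i a - va) + (Function.update x i b - vb)) := by
    funext n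
    by_cases hn : n = i
    · subst hn
      simp only [Pi.sub_apply, Pi.smul_apply, Pi.add_apply, Function.update_self, smul_eq_mul]
      ring
    · simp only [Pi.sub_apply, Pi.smul_apply, Pi.add_apply, Function.update_of_ne hn,
        smul_eq_mul]
      ring
  have h1 : huberObj B (Function.update x i ((a + b) / 2)) ((1 / 2 : ℝ) • (va + vb))
      ≤ (huberObj B (Function.update x i a) va + huberObj B (Function.update x i b) vb) / 2 := by
    unfold huberObj
    rw [key]
    have hn1 := norm1_half_add va vb
    have hn2 : norm2sq (B.mulVec ((1 / 2 : ℝ) •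
        ((Function.update x i a - va) + (Function.update x i b - vb))))
        ≤ (norm2sq (B.mulVec (Function.update x i a - va))
            + norm2sq (B.mulVec (Function.update x i b - vb))) / 2 := by
      rw [Matrix.mulVec_smul, Matrix.mulVec_add]
      exact norm2sq_half_add _ _
    linarith
  have h0 := genHuber_le B (Function.update x i ((a + b) / 2)) ((1 / 2 : ℝ) • (va + vb))
  linarith

/-- `t ↦ S_B(update x i t)` is 1-Lipschitz. -/
lemma genHuber_lipschitz (t t' : ℝ) :
    genHuber B (Function.update x i t) ≤ genHuber B (Function.update x i t') + |t - t'| := by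
  refine le_of_forall_pos_le_add fun ε hε => ?_
  obtain ⟨v', hv'⟩ := genHuber_exists_lt B (Function.update x i t') hε
  set v := v' + (t - t') • (Pi.single i 1 : Fin N → ℝ) with hv
  have key : Function.update x i t - v = Function.update x i t' - v' := by
    funext n
    by_cases hn : n = i
    · subst hn
      simp only [hv, Pi.sub_apply, Pi.add_apply, Pi.smul_apply, Function.update_self,
        Pi.single_eq_same, smul_eq_mul, mul_one]
      ring
    · simp only [hv, Pi.sub_apply, Pi.add_apply, Pi.smul_apply, Function.update_of_ne hn,
        Pi.single_eq_of_ne hn, smul_eq_mul, mul_zero, add_zero]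
  have hn1 : norm1 v ≤ norm1 v' + |t - t'| := by
    have hle : ∀ n, |v n| ≤ |v' n| + (if n = i then |t - t'| else 0) := by
      intro n
      by_cases hn : n = i
      · subst hn
        simp only [hv, Pi.add_apply, Pi.smul_apply, Pi.single_eq_same, smul_eq_mul,
          mul_one, if_pos rfl]
        exact abs_add_le _ _
      · simp [hv, Pi.single_eq_of_ne hn, hn]
    calc norm1 v ≤ ∑ n, (|v' n| + if n = i then |t - t'| else 0) :=
          Finset.sum_le_sum fun n _ => hle n
      _ = norm1 v' + |t - t'| := by
          rw [Finset.sum_add_distrib]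
          simp [norm1]
  have hmain := genHuber_le B (Function.update x i t) v
  unfold huberObj at hmain hv'
  rw [key] at hmain
  linarith

end Aux2

section Aux3

variable {M N : ℕ} (B : Matrix (Fin M) (Fin N) ℝ) (x : Fin N → ℝ) (i : Fin N)

/-- Quadratic upper bound at any point, via a minimizer. -/
lemma genHuber_quad_bound (t0 : ℝ) :
    ∃ w C : ℝ, 0 ≤ C ∧ ∀ h : ℝ,
      genHuber B (Function.update x i (t0 + h)) ≤
        genHuber B (Function.update x i t0) + w * h + C * h ^ 2 := by
  obtain ⟨vs, hvs⟩ := huberObj_exists_min B (Function.update x i t0)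
  set c : Fin M → ℝ := B.mulVec (Pi.single i 1 : Fin N → ℝ) with hc
  set u : Fin M → ℝ := B.mulVec (Function.update x i t0 - vs) with hu
  refine ⟨∑ m, u m * c m, (1 / 2) * norm2sq c,
    by have := norm2sq_nonneg c; linarith, fun h => ?_⟩
  have key : Function.update x i (t0 + h) - vs
      = (Function.update x i t0 - vs) + h • (Pi.single i 1 : Fin N → ℝ) := by
    funext n
    by_cases hn : n = i
    · subst hn
      simp only [Pi.sub_apply, Pi.add_apply, Pi.smul_apply, Function.update_self,
        Pi.single_eq_same, smul_eq_mul, mul_one]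
      ring
    · simp only [Pi.sub_apply, Pi.add_apply, Pi.smul_apply, Function.update_of_ne hn,
        Pi.single_eq_of_ne hn, smul_eq_mul, mul_zero, add_zero]
  have heq : huberObj B (Function.update x i (t0 + h)) vs
      = huberObj B (Function.update x i t0) vs
        + (∑ m, u m * c m) * h + ((1 / 2) * norm2sq c) * h ^ 2 := by
    unfold huberObj
    rw [key, Matrix.mulVec_add, Matrix.mulVec_smul, ← hu, ← hc, norm2sq_add_smul]
    ring
  have h1 := genHuber_le B (Function.update x i (t0 + h)) vs
  have h2 : huberObj B (Function.update x i t0) vs = genHuber B (Function.update x i t0) := by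
    refine le_antisymm ?_ (genHuber_le B (Function.update x i t0) vs)
    rw [genHuber_eq]
    exact le_ciInf hvs
  rw [heq, h2] at h1
  linarith

/-- A function pinched between two quadratics has a derivative. -/
lemma hasDerivAt_of_quad_pinch (φ : ℝ → ℝ) (t0 w C : ℝ) (hC : 0 ≤ C)
    (hub : ∀ h, φ (t0 + h) ≤ φ t0 + w * h + C * h ^ 2)
    (hlow : ∀ h, φ t0 + w * h - C * h ^ 2 ≤ φ (t0 + h)) :
    HasDerivAt φ w t0 := by
  rw [hasDerivAt_iff_isLittleO_nhds_zero, Asymptotics.isLittleO_iff]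
  intro c hc
  rw [Metric.eventually_nhds_iff]
  refine ⟨c / (C + 1), by positivity, fun {h} hh => ?_⟩
  rw [dist_zero_right, Real.norm_eq_abs] at hh
  rw [Real.norm_eq_abs, Real.norm_eq_abs, smul_eq_mul]
  have h1 := hub h
  have h2 := hlow h
  have habs : |φ (t0 + h) - φ t0 - h * w| ≤ C * h ^ 2 := by
    rw [abs_le]
    constructor <;> nlinarith
  have h4 : |h| * (C + 1) < c := by
    rw [← lt_div_iff₀ (by linarith : (0:ℝ) < C + 1)]
    exact hh
  have h5 : C * h ^ 2 ≤ c * |h| := by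
    nlinarith [abs_nonneg h, sq_abs h, hC]
  linarith

/-- The derivative of `t ↦ S_B(update x i t)` exists and is bounded by 1 in absolute value. -/
lemma genHuber_hasDerivAt (t0 : ℝ) :
    ∃ w : ℝ, |w| ≤ 1 ∧
      HasDerivAt (fun t => genHuber B (Function.update x i t)) w t0 := by
  obtain ⟨w, C, hC, hub⟩ := genHuber_quad_bound B x i t0
  have hlow : ∀ h : ℝ,
      genHuber B (Function.update x i t0) + w * h - C * h ^ 2
        ≤ genHuber B (Function.update x i (t0 + h)) := by
    intro h
    have hmid := genHuber_midpoint B x i (t0 + h) (t0 - h)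
    have e1 : ((t0 + h) + (t0 - h)) / 2 = t0 := by ring
    rw [e1] at hmid
    have hu := hub (-h)
    have e2 : t0 + -h = t0 - h := by ring
    rw [e2] at hu
    nlinarith [hmid, hu]
  refine ⟨w, ?_, hasDerivAt_of_quad_pinch _ t0 w C hC hub hlow⟩
  refine le_of_forall_pos_le_add fun ε hε => ?_
  set h : ℝ := ε / (C + 1) with hhdef
  have hhp : 0 < h := by positivity
  have hCh : C * h ≤ ε := by
    have h6 : C / (C + 1) ≤ 1 := div_le_one_of_le₀ (by linarith) (by linarith)
    calc C * (ε / (C + 1)) = (C / (C + 1)) * ε := by ring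
      _ ≤ 1 * ε := by nlinarith
      _ = ε := one_mul ε
  have u1 := hub h
  have u2 := hub (-h)
  have l2 := genHuber_lipschitz B x i t0 (t0 + h)
  have l3 := genHuber_lipschitz B x i t0 (t0 + -h)
  have e2 : |t0 - (t0 + h)| = h := by
    rw [show t0 - (t0 + h) = -h by ring, abs_neg, abs_of_pos hhp]
  have e3 : |t0 - (t0 + -h)| = h := by
    rw [show t0 - (t0 + -h) = h by ring, abs_of_pos hhp]
  rw [e2] at l2
  rw [e3] at l3
  rw [abs_le]
  constructor <;> nlinarith [u1, u2, l2, l3, hCh, hhp]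

end Aux3

/-- At a point where `x_i ≠ 0`, the partial derivative of the GMC penalty with respect
to coordinate `i` exists and has the same sign as `x_i` or is zero. -/
theorem gmcPenalty_partialDeriv_sign {M N : ℕ} (B : Matrix (Fin M) (Fin N) ℝ)
    (x : Fin N → ℝ) (i : Fin N) (hx : x i ≠ 0) :
    ∃ d : ℝ, HasDerivAt (fun t : ℝ => gmcPenalty B (Function.update x i t)) d (x i) ∧
      0 ≤ x i * d := by
  obtain ⟨w, hw1, hw2⟩ := genHuber_hasDerivAt B x i (x i)
  set s : ℝ := (SignType.sign (x i) : ℝ) with hs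
  set c0 : ℝ := ∑ n ∈ Finset.univ \ {i}, |x n| with hc0
  have hnorm1 : ∀ t : ℝ, norm1 (Function.update x i t) = |t| + c0 := by
    intro t
    have hupd : (fun n => |Function.update x i t n|)
        = Function.update (fun n => |x n|) i |t| := by
      funext n
      by_cases hn : n = i
      · subst hn; simp
      · simp [Function.update_of_ne hn]
    unfold norm1
    rw [show (∑ n, |Function.update x i t n|)
        = ∑ n, Function.update (fun n => |x n|) i |t| n by rw [hupd]]
    rw [Finset.sum_update_of_mem (Finset.mem_univ i)]
  have habs : HasDerivAt (fun t : ℝ => |t| + c0) s (x i) :=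
    (hasDerivAt_abs hx).add_const c0
  have hfun : (fun t : ℝ => gmcPenalty B (Function.update x i t))
      = fun t : ℝ => (|t| + c0) - genHuber B (Function.update x i t) := by
    funext t
    rw [gmcPenalty, hnorm1]
  refine ⟨s - w, ?_, ?_⟩
  · rw [hfun]
    exact habs.sub hw2
  · obtain ⟨hwl, hwr⟩ := abs_le.1 hw1
    rcases lt_or_gt_of_ne hx with hneg | hpos
    · have hsv : s = -1 := by rw [hs, sign_neg hneg]; simp
      rw [hsv]
      nlinarith
    · have hsv : s = 1 := by rw [hs, sign_pos hpos]; simp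
      rw [hsv]
      nlinarith
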